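/- Every shortened proper array code with modulus q, column-weight r ≥ 3, and at least two retained block-columns has girth at most eight; that is, its Tanner graph contains a cycle of length eight (passing through two distinct block-columns). -/

import Mathlib

/-- The Tanner graph of a (possibly shortened) array code with modulus `q`,
block-row labels `a 0, …, a (r-1)` (elements of `ZMod q`), and retained
block-column label set `S ⊆ ZMod q`.  Row vertices are pairs `(i, x)`
(block-row `i`, row `x` within the block); column vertices are pairs `(j, y)`
with `j ∈ S` (block-column labeled `j`, column `y` within the block).
A row `(i, x)` is adjacent to a column `(j, y)` iff the corresponding entry of
the parity-check matrix, i.e. entry `(x, y)` of `P ^ (a i * j)`, equals `1`,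
which happens iff `y = x + a i * j`. -/
def tannerGraph (q r : ℕ) (a : Fin r → ZMod q) (S : Finset (ZMod q)) :
    SimpleGraph ((Fin r × ZMod q) ⊕ ({j // j ∈ S} × ZMod q)) where
  Adj u v :=
    match u, v with
    | Sum.inl (i, x), Sum.inr (j, y) => y = x + a i * (j : ZMod q)
    | Sum.inr (j, y), Sum.inl (i, x) => y = x + a i * (j : ZMod q)
    | _, _ => False
  symm := ⟨by
    rintro (⟨i, x⟩ | ⟨j, y⟩) (⟨i', x'⟩ | ⟨j', y'⟩) h <;> simp_all⟩
  loopless := ⟨by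
    rintro (⟨i, x⟩ | ⟨j, y⟩) h <;> simp_all⟩

/-!
Take two retained block-columns `j ≠ k` and three consecutive block-rows with labels
`a₀, a₀ + d, a₀ + 2d`. Walking row `a₀` → column `j` → row `a₀ + d` → column `k` →
row `a₀ + 2d` → column `j` → row `a₀ + d` → column `k` → row `a₀` shifts the row coordinate by
`(a₀ - 2(a₀ + d) + (a₀ + 2d)) (j - k) = 0`, so the walk closes up. Its two visits to each of the
three repeated blocks are at positions differing by `± d (j - k)`, which is
nonzero because `ZMod q` is a field; so the walk is a cycle.
-/

open SimpleGraph

theorem SimpleGraph.Walk.IsPath.isCycle_cons {V : Type*} {G : SimpleGraph V} {u v : V}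
    {p : G.Walk v u} (hp : p.IsPath) (h : G.Adj u v) (hlen : 2 ≤ p.length) :
    (Walk.cons h p).IsCycle :=
  Walk.isCycle_iff_isPath_tail_and_le_length.mpr ⟨by simpa using hp, by simp; omega⟩

section TannerGraph

variable {q r : ℕ} {a : Fin r → ZMod q} {S : Finset (ZMod q)}

theorem tannerGraph_adj_inl_inr {i : Fin r} {x : ZMod q} {j : S} {y : ZMod q} :
    (tannerGraph q r a S).Adj (.inl (i, x)) (.inr (j, y)) ↔ y = x + a i * j :=
  Iff.rfl

theorem tannerGraph_adj_inr_inl {i : Fin r} {x : ZMod q} {j : S} {y : ZMod q} :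
    (tannerGraph q r a S).Adj (.inr (j, y)) (.inl (i, x)) ↔ y = x + a i * j :=
  Iff.rfl

theorem tannerGraph_exists_isCycle_length_eight {i₀ i₁ i₂ : Fin r} {j k : S} {δ : ZMod q}
    (h₀₂ : i₀ ≠ i₂) (h₁ : a i₁ - a i₀ = δ) (h₂ : a i₂ - a i₁ = δ)
    (hδ : δ * ((j : ZMod q) - k) ≠ 0) :
    ∃ (v : (Fin r × ZMod q) ⊕ (S × ZMod q)) (c : (tannerGraph q r a S).Walk v v),
      c.IsCycle ∧ c.length = 8 := by
  have hjk : j ≠ k := by rintro rfl; simp at hδ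
  have hδ₀ : δ ≠ 0 := left_ne_zero_of_mul hδ
  have h₀₁ : i₀ ≠ i₁ := fun h ↦ hδ₀ (by rw [← h₁, h, sub_self])
  have h₁₂ : i₁ ≠ i₂ := fun h ↦ hδ₀ (by rw [← h₂, h, sub_self])
  have hx : -(δ * j) ≠ -(δ * k) := fun h ↦ hδ (by linear_combination -h)
  have hy₁ : a i₀ * j ≠ a i₂ * j - δ * j - δ * k :=
    fun h ↦ hδ (by linear_combination -h - j * h₁ - j * h₂)
  have hy₃ : a i₁ * k - δ * j ≠ a i₀ * k := fun h ↦ hδ (by linear_combination -h + k * h₁)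
  have e₀₁ : (tannerGraph q r a S).Adj (.inl (i₀, 0)) (.inr (j, a i₀ * j)) :=
    tannerGraph_adj_inl_inr.mpr (by ring)
  have e₁₂ : (tannerGraph q r a S).Adj (.inr (j, a i₀ * j)) (.inl (i₁, -(δ * j))) :=
    tannerGraph_adj_inr_inl.mpr (by linear_combination -j * h₁)
  have e₂₃ : (tannerGraph q r a S).Adj (.inl (i₁, -(δ * j))) (.inr (k, a i₁ * k - δ * j)) :=
    tannerGraph_adj_inl_inr.mpr (by ring)
  have e₃₄ : (tannerGraph q r a S).Adj (.inr (k, a i₁ * k - δ * j))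
      (.inl (i₂, -(δ * j) - δ * k)) :=
    tannerGraph_adj_inr_inl.mpr (by linear_combination -k * h₂)
  have e₄₅ : (tannerGraph q r a S).Adj (.inl (i₂, -(δ * j) - δ * k))
      (.inr (j, a i₂ * j - δ * j - δ * k)) :=
    tannerGraph_adj_inl_inr.mpr (by ring)
  have e₅₆ : (tannerGraph q r a S).Adj (.inr (j, a i₂ * j - δ * j - δ * k))
      (.inl (i₁, -(δ * k))) :=
    tannerGraph_adj_inr_inl.mpr (by linear_combination j * h₂)
  have e₆₇ : (tannerGraph q r a S).Adj (.inl (i₁, -(δ * k))) (.inr (k, a i₀ * k)) :=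
    tannerGraph_adj_inl_inr.mpr (by linear_combination -k * h₁)
  have e₇₀ : (tannerGraph q r a S).Adj (.inr (k, a i₀ * k)) (.inl (i₀, 0)) :=
    tannerGraph_adj_inr_inl.mpr (by ring)
  let p := Walk.cons e₁₂ <| .cons e₂₃ <| .cons e₃₄ <| .cons e₄₅ <| .cons e₅₆ <| .cons e₆₇ <|
    .cons e₇₀ .nil
  have hp : p.IsPath := by
    rw [Walk.isPath_def]
    simp [p, hx, hy₁, hy₃, hjk, hjk.symm, h₀₁.symm, h₀₂.symm, h₁₂, h₁₂.symm]
  exact ⟨_, .cons e₀₁ p, hp.isCycle_cons e₀₁ (by simp [p]), rfl⟩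

end TannerGraph

theorem pac_girth_at_most_eight_general (q r : ℕ) (hq : q.Prime)
    (hr : 3 ≤ r) (a : Fin r → ZMod q) (a₀ d : ZMod q) (hd : d ≠ 0)
    (hAP : ∀ i : Fin r, a i = a₀ + (i : ℕ) * d)
    (S : Finset (ZMod q)) (hS : 2 ≤ S.card) :
    (tannerGraph q r a S).egirth ≤ 8 ∧
      ∃ (v : (Fin r × ZMod q) ⊕ ({j // j ∈ S} × ZMod q))
        (c : (tannerGraph q r a S).Walk v v), c.IsCycle ∧ c.length = 8 := by
  have : Fact q.Prime := ⟨hq⟩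
  obtain ⟨j, hj, k, hk, hjk⟩ := Finset.one_lt_card.mp hS
  have h₁ : a ⟨1, by omega⟩ - a ⟨0, by omega⟩ = d := by simp [hAP]
  have h₂ : a ⟨2, by omega⟩ - a ⟨1, by omega⟩ = d := by simp [hAP]; ring
  obtain ⟨v, c, hc, hlen⟩ := tannerGraph_exists_isCycle_length_eight (j := ⟨j, hj⟩) (k := ⟨k, hk⟩)
    (by simp [Fin.ext_iff]) h₁ h₂ (mul_ne_zero hd (sub_ne_zero.mpr hjk))
  exact ⟨by simpa [hlen] using egirth_le_length hc, v, c, hc, hlen⟩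

/-- Every shortened proper array code with modulus `q` (an odd
prime), column-weight `r ≥ 3` (block-row labels in arithmetic progression with
common difference `d ≢ 0`, distinct) and at least two retained block-columns
has girth at most eight; that is, its Tanner graph contains a cycle of length
eight. -/
theorem pac_girth_at_most_eight (q r : ℕ) (hq : q.Prime) (hqodd : Odd q)
    (hr : 3 ≤ r) (a : Fin r → ZMod q) (a₀ d : ZMod q) (hd : d ≠ 0)
    (hAP : ∀ i : Fin r, a i = a₀ + (i : ℕ) * d) (ha : Function.Injective a)
    (S : Finset (ZMod q)) (hS : 2 ≤ S.card) :
    (tannerGraph q r a S).egirth ≤ 8 ∧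
      ∃ (v : (Fin r × ZMod q) ⊕ ({j // j ∈ S} × ZMod q))
        (c : (tannerGraph q r a S).Walk v v), c.IsCycle ∧ c.length = 8 :=
  pac_girth_at_most_eight_general q r hq hr a a₀ d hd hAP S hS
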